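/- arXiv:1008.0804 — 2 statements merged into one kernel-verified Lean document; each statement's English description precedes it below -/
import Mathlib

section
/- Buchberger's first criterion: if f and g are polynomials whose leading monomials (with respect to a fixed monomial order) are relatively prime (i.e., lcm(T(f),T(g)) = T(f)·T(g)), then the S-polynomial S(f,g) reduces to zero modulo {f,g}. -/
/-!
Write `f = T(f) + f'` and `g = T(g) + g'` (leading coefficients `1`). Since `T(f)` and `T(g)`
are coprime, `S(f,g) = T(f)·g − T(g)·f = g'·f − f'·g`, which is already a representation in
terms of `f` and `g`. It is a standard one because the two summands have distinct leading
exponents, so neither can cancel in the difference: `T(g') + T(f) = T(f') + T(g)` would force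
`T(g) ∣ T(g')` by coprimality, although `T(g') ≺ T(g)`.
-/

open MvPolynomial

noncomputable def leadExp {σ : Type*} (m : MonomialOrder σ) (f : MvPolynomial σ ℂ) :
    σ →₀ ℕ :=
  m.toSyn.symm (f.support.sup (fun d => m.toSyn d))


open scoped MonomialOrder

theorem Finsupp.le_of_add_eq_add_of_sup_eq_add {σ : Type*} {a b x y : σ →₀ ℕ}
    (hab : a ⊔ b = a + b) (h : x + a = y + b) : b ≤ x := by
  intro i
  have hab_i := DFunLike.congr_fun hab i
  have h_i := DFunLike.congr_fun h i
  simp only [Finsupp.sup_apply, Finsupp.add_apply] at hab_i h_i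
  omega

namespace MonomialOrder

variable {σ : Type*} {m : MonomialOrder σ} {R : Type*}

lemma leadExp_eq_degree (f : MvPolynomial σ ℂ) : leadExp m f = m.degree f := rfl

section CommSemiring

variable [CommSemiring R]

lemma degree_le_degree_add_of_degree_ne {p q : MvPolynomial σ R}
    (h : p ≠ 0 → q ≠ 0 → m.degree p ≠ m.degree q) :
    (p = 0 ∨ m.degree p ≼[m] m.degree (p + q)) ∧
      (q = 0 ∨ m.degree q ≼[m] m.degree (p + q)) := by
  by_cases hp : p = 0
  · simp [hp]
  by_cases hq : q = 0
  · simp [hq]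
  rw [degree_add_of_ne (h hp hq)]
  exact ⟨Or.inr le_sup_left, Or.inr le_sup_right⟩

end CommSemiring

section CommRing

variable [CommRing R]

lemma degree_sub_leadingTerm_lt_of_ne_zero {f : MvPolynomial σ R}
    (h : f - m.leadingTerm f ≠ 0) : m.degree (f - m.leadingTerm f) ≺[m] m.degree f :=
  degree_sub_leadingTerm_lt_degree (degree_ne_zero_of_sub_leadingTerm_ne_zero h)

lemma sPolynomial_eq_of_sup_eq_add {f g : MvPolynomial σ R}
    (hfg : m.degree f ⊔ m.degree g = m.degree f + m.degree g) :
    m.sPolynomial f g = -(g - m.leadingTerm g) * f + (f - m.leadingTerm f) * g := by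
  rw [sPolynomial_def, hfg, add_tsub_cancel_left, add_tsub_cancel_right]
  simp only [leadingTerm]
  ring

lemma degree_sub_leadingTerm_mul_ne_of_sup_eq_add [NoZeroDivisors R] {f g : MvPolynomial σ R}
    (hfg : m.degree f ⊔ m.degree g = m.degree f + m.degree g)
    (hf : f - m.leadingTerm f ≠ 0) (hg : g - m.leadingTerm g ≠ 0) :
    m.degree ((g - m.leadingTerm g) * f) ≠ m.degree ((f - m.leadingTerm f) * g) := by
  have hf₀ : f ≠ 0 := by rintro rfl; simp at hf
  have hg₀ : g ≠ 0 := by rintro rfl; simp at hg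
  rw [degree_mul hg hf₀, degree_mul hf hg₀]
  intro h
  have hle : m.degree g ≤ m.degree (g - m.leadingTerm g) :=
    Finsupp.le_of_add_eq_add_of_sup_eq_add hfg h
  exact (m.toSyn_monotone hle).not_gt (degree_sub_leadingTerm_lt_of_ne_zero hg)

theorem exists_standard_representation_sPolynomial [NoZeroDivisors R] {f g : MvPolynomial σ R}
    (hfg : m.degree f ⊔ m.degree g = m.degree f + m.degree g) :
    ∃ a b : MvPolynomial σ R, m.sPolynomial f g = a * f + b * g ∧
      (a * f = 0 ∨ m.degree (a * f) ≼[m] m.degree (m.sPolynomial f g)) ∧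
      (b * g = 0 ∨ m.degree (b * g) ≼[m] m.degree (m.sPolynomial f g)) := by
  refine ⟨-(g - m.leadingTerm g), f - m.leadingTerm f, sPolynomial_eq_of_sup_eq_add hfg, ?_⟩
  rw [sPolynomial_eq_of_sup_eq_add hfg]
  refine degree_le_degree_add_of_degree_ne fun hg' hf' => ?_
  rw [neg_mul, neg_ne_zero] at hg'
  rw [neg_mul, degree_neg]
  exact degree_sub_leadingTerm_mul_ne_of_sup_eq_add hfg
    (left_ne_zero_of_mul hf') (left_ne_zero_of_mul hg')

end CommRing

end MonomialOrder

theorem stmt6_general {σ : Type*} (m : MonomialOrder σ) (f g S : MvPolynomial σ ℂ)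
    (hfc : f.coeff (leadExp m f) = 1) (hgc : g.coeff (leadExp m g) = 1)
    (hprime : leadExp m f ⊔ leadExp m g = leadExp m f + leadExp m g)
    (hS : S = monomial (leadExp m f ⊔ leadExp m g - leadExp m g) (1 : ℂ) * g -
      monomial (leadExp m f ⊔ leadExp m g - leadExp m f) (1 : ℂ) * f) :
    S ∈ Ideal.span {f, g} ∧
    ∃ a b : MvPolynomial σ ℂ,
      S = a * f + b * g ∧
      (a * f = 0 ∨ m.toSyn (leadExp m (a * f)) ≤ m.toSyn (leadExp m S)) ∧
      (b * g = 0 ∨ m.toSyn (leadExp m (b * g)) ≤ m.toSyn (leadExp m S)) := by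
  simp only [MonomialOrder.leadExp_eq_degree] at hfc hgc hprime hS ⊢
  have hS_eq : S = m.sPolynomial g f := by
    rw [hS, MonomialOrder.sPolynomial_def, sup_comm]
    simp only [MonomialOrder.leadingCoeff, hfc, hgc]
  subst hS_eq
  rw [sup_comm, add_comm] at hprime
  obtain ⟨b, a, hrep, hb, ha⟩ := MonomialOrder.exists_standard_representation_sPolynomial hprime
  rw [add_comm] at hrep
  exact ⟨Ideal.mem_span_pair.mpr ⟨a, b, hrep.symm⟩, a, b, hrep, ha, hb⟩

/-- Buchberger's first criterion: if the leading monomials of `f` and `g` (with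
leading coefficients normalized to `1`) are relatively prime, i.e.
`lcm(T(f),T(g)) = T(f)·T(g)`, then the S-polynomial
`S(f,g) = (lcm/T(g))·g − (lcm/T(f))·f` reduces to zero modulo `{f,g}`: it lies in
the ideal `(f,g)` and admits a standard representation `S = a·f + b·g` in which
the leading monomials of `a·f` and `b·g` do not exceed that of `S(f,g)`. -/
theorem stmt6 {σ : Type*} (m : MonomialOrder σ) (f g S : MvPolynomial σ ℂ)
    (hf : f ≠ 0) (hg : g ≠ 0)
    (hfc : f.coeff (leadExp m f) = 1) (hgc : g.coeff (leadExp m g) = 1)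
    (hprime : leadExp m f ⊔ leadExp m g = leadExp m f + leadExp m g)
    (hS : S = monomial (leadExp m f ⊔ leadExp m g - leadExp m g) (1 : ℂ) * g -
      monomial (leadExp m f ⊔ leadExp m g - leadExp m f) (1 : ℂ) * f) :
    S ∈ Ideal.span {f, g} ∧
    ∃ a b : MvPolynomial σ ℂ,
      S = a * f + b * g ∧
      (a * f = 0 ∨ m.toSyn (leadExp m (a * f)) ≤ m.toSyn (leadExp m S)) ∧
      (b * g = 0 ∨ m.toSyn (leadExp m (b * g)) ≤ m.toSyn (leadExp m S)) :=
  stmt6_general m f g S hfc hgc hprime hS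
end

section
/- A monomial in the variables fⁱ[s], gⱼ[t] (1 ≤ i,j ≤ n, −N₁ ≤ s,t ≤ N₂, n ≥ 3) maps to a basis element of AQ = ℂ[fⁱ[s],gⱼ[t]]/(r[−2N₁],…,r[2N₂]) if and only if it is divisible by none of the monomials g₁[t]f¹[t] (−N₁ ≤ t ≤ N₂) and gₙ[t]fⁿ[t+1] (−N₁ ≤ t ≤ N₂−1); the images of such monomials form a ℂ-basis of AQ. -/
open MvPolynomial

/-- Index set `{k : ℤ | −N₁ ≤ k ≤ N₂}` for the loop modes. -/
abbrev QIdx (N₁ N₂ : ℕ) := {k : ℤ // k ∈ Finset.Icc (-(N₁ : ℤ)) (N₂ : ℤ)}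

/-- The quasimap relation `r[l] = Σ_{s+t=l} Σ_{i=1}^n fⁱ[s] gᵢ[t]` in the polynomial
ring on variables `fⁱ[s] = X (inl i, s)` and `gⱼ[t] = X (inr j, t)`. -/
noncomputable def qmRel (n N₁ N₂ : ℕ) (l : ℤ) :
    MvPolynomial ((Fin n ⊕ Fin n) × QIdx N₁ N₂) ℂ :=
  ∑ p : QIdx N₁ N₂, ∑ q : QIdx N₁ N₂,
    if (p : ℤ) + (q : ℤ) = l then
      ∑ i : Fin n, X (Sum.inl i, p) * X (Sum.inr i, q)
    else 0

/-- The ideal generated by the relations `r[l]`, `−2N₁ ≤ l ≤ 2N₂`. -/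
noncomputable def qmIdeal (n N₁ N₂ : ℕ) :
    Ideal (MvPolynomial ((Fin n ⊕ Fin n) × QIdx N₁ N₂) ℂ) :=
  Ideal.span {p | ∃ l ∈ Finset.Icc (-(2 * N₁ : ℤ)) (2 * N₂ : ℤ), p = qmRel n N₁ N₂ l}

/-!
With respect to a suitable additive weight on the variables, the relation `r[2u]` has the single
leading term `f¹[u] g₁[u]` and `r[2u+1]` the single leading term `fⁿ[u+1] gₙ[u]`, and these leading
terms are pairwise coprime. By Buchberger's first criterion the relations are then a Gröbner
basis, and the monomials divisible by no leading term give a basis of the quotient. Concretely,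
reducing a monomial with any applicable relation lowers its weight, and two reductions with
coprime leading terms can be continued to a common result (the diamond lemma), so the reduced form
is independent of choices: it is a linear map that kills the ideal, fixes the standard monomials
and differs from the identity by elements of the ideal.
-/

structure CoprimeLeadingFamily (σ R κ : Type*) [CommRing R] where
  lead : κ → σ →₀ ℕ
  tail : κ → MvPolynomial σ R
  varWeight : σ → ℕ
  weight_lt_of_mem_support_tail :
    ∀ k, ∀ x ∈ (tail k).support, Finsupp.weight varWeight x < Finsupp.weight varWeight (lead k)
  pairwise_disjoint_lead : Pairwise fun k k' => Disjoint (lead k) (lead k')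

lemma Finsupp.add_le_of_disjoint {ι : Type*} {f g m : ι →₀ ℕ} (hfg : Disjoint f g)
    (hf : f ≤ m) (hg : g ≤ m) : f + g ≤ m := by
  intro v
  have hv : f v = 0 ∨ g v = 0 := by
    by_contra! h
    exact Finset.disjoint_left.mp (Finsupp.disjoint_iff.mp hfg) (Finsupp.mem_support_iff.mpr h.1)
      (Finsupp.mem_support_iff.mpr h.2)
  have := hf v; have := hg v
  simp only [Finsupp.coe_add, Pi.add_apply]
  omega

lemma MvPolynomial.monomial_one_mul_eq_sum {σ R : Type*} [CommSemiring R] (c : σ →₀ ℕ)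
    (p : MvPolynomial σ R) :
    monomial c 1 * p = ∑ x ∈ p.support, coeff x p • monomial (c + x) 1 := by
  conv_lhs => rw [p.as_sum]
  simp only [Finset.mul_sum, monomial_mul, one_mul, smul_monomial, smul_eq_mul, mul_one]

lemma MvPolynomial.smul_monomial_one {σ R : Type*} [CommSemiring R] (m : σ →₀ ℕ) (a : R) :
    a • monomial m (1 : R) = monomial m a := by
  rw [smul_monomial, smul_eq_mul, mul_one]

namespace CoprimeLeadingFamily

variable {σ R κ : Type*} [CommRing R] (S : CoprimeLeadingFamily σ R κ)

noncomputable def rel (k : κ) : MvPolynomial σ R := monomial (S.lead k) 1 + S.tail k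

noncomputable def ideal : Ideal (MvPolynomial σ R) := Ideal.span (Set.range S.rel)

def IsStandard (d : σ →₀ ℕ) : Prop := ∀ k, ¬ S.lead k ≤ d

noncomputable abbrev weight (m : σ →₀ ℕ) : ℕ := Finsupp.weight S.varWeight m

lemma weight_reduce_lt {k : κ} {m x : σ →₀ ℕ} (hk : S.lead k ≤ m) (hx : x ∈ (S.tail k).support) :
    S.weight (m - S.lead k + x) < S.weight m := by
  have := S.weight_lt_of_mem_support_tail k x hx
  conv_rhs => rw [← tsub_add_cancel_of_le hk]
  simp only [weight, map_add] at this ⊢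
  omega

open Classical in
noncomputable def nf (m : σ →₀ ℕ) : MvPolynomial σ R :=
  if h : ∃ k, S.lead k ≤ m then
    -∑ x ∈ (S.tail h.choose).support.attach,
      coeff x.1 (S.tail h.choose) • nf (m - S.lead h.choose + x.1)
  else monomial m 1
termination_by S.weight m
decreasing_by exact S.weight_reduce_lt h.choose_spec x.2

noncomputable def reduceBy (k : κ) (m : σ →₀ ℕ) : MvPolynomial σ R :=
  -∑ x ∈ (S.tail k).support, coeff x (S.tail k) • S.nf (m - S.lead k + x)

lemma nf_of_isStandard {m : σ →₀ ℕ} (hm : S.IsStandard m) : S.nf m = monomial m 1 := by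
  rw [nf, dif_neg (by simpa [IsStandard] using hm)]

lemma nf_eq_reduceBy_choose {m : σ →₀ ℕ} (h : ∃ k, S.lead k ≤ m) :
    S.nf m = S.reduceBy h.choose m := by
  rw [nf, dif_pos h, reduceBy, Finset.sum_attach _ (fun x => coeff x _ • S.nf (m - _ + x))]

lemma reduceBy_lead_add_lead_add {k₀ k : κ} {c : σ →₀ ℕ}
    (hnf : ∀ x ∈ (S.tail k₀).support,
      S.nf (S.lead k + c + x) = S.reduceBy k (S.lead k + c + x)) :
    S.reduceBy k₀ (S.lead k₀ + S.lead k + c) =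
      ∑ x ∈ (S.tail k₀).support, ∑ y ∈ (S.tail k).support,
        (coeff x (S.tail k₀) * coeff y (S.tail k)) • S.nf (c + x + y) := by
  rw [reduceBy, ← Finset.sum_neg_distrib]
  refine Finset.sum_congr rfl fun x hx => ?_
  simp only [add_assoc, add_tsub_cancel_left] at hnf ⊢
  rw [hnf x hx, reduceBy, smul_neg, neg_neg, Finset.smul_sum]
  simp only [add_assoc, add_tsub_cancel_left, mul_smul]

/-- The diamond lemma: since distinct leading monomials are coprime, reducing with any
applicable leading monomial gives the same normal form. -/
theorem nf_eq_reduceBy {m : σ →₀ ℕ} {k : κ} (hk : S.lead k ≤ m) :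
    S.nf m = S.reduceBy k m := by
  induction hw : S.weight m using Nat.strong_induction_on generalizing m k with
  | _ w ih =>
  have hex : ∃ k, S.lead k ≤ m := ⟨k, hk⟩
  rw [S.nf_eq_reduceBy_choose hex]
  have hk₀ := hex.choose_spec
  generalize hex.choose = k₀ at hk₀ ⊢
  rcases eq_or_ne k₀ k with rfl | hne
  · rfl
  obtain ⟨c, rfl⟩ :=
    exists_add_of_le (Finsupp.add_le_of_disjoint (S.pairwise_disjoint_lead hne) hk₀ hk)
  have h₀ : ∀ x ∈ (S.tail k₀).support,
      S.nf (S.lead k + c + x) = S.reduceBy k (S.lead k + c + x) := fun x hx => by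
    refine ih _ ?_ (le_add_right (le_add_right le_rfl)) rfl
    simpa only [← hw, add_assoc, add_tsub_cancel_left] using S.weight_reduce_lt hk₀ hx
  have h₁ : ∀ y ∈ (S.tail k).support,
      S.nf (S.lead k₀ + c + y) = S.reduceBy k₀ (S.lead k₀ + c + y) := fun y hy => by
    refine ih _ ?_ (le_add_right (le_add_right le_rfl)) rfl
    simpa only [← hw, add_right_comm _ (S.lead k), add_tsub_cancel_right]
      using S.weight_reduce_lt hk hy
  rw [S.reduceBy_lead_add_lead_add h₀, add_comm (S.lead k₀), S.reduceBy_lead_add_lead_add h₁,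
    Finset.sum_comm]
  simp only [mul_comm, add_right_comm c]

lemma monomial_sub_nf_mem_ideal (m : σ →₀ ℕ) : monomial m 1 - S.nf m ∈ S.ideal := by
  induction hw : S.weight m using Nat.strong_induction_on generalizing m with
  | _ w ih =>
  by_cases hm : ∃ k, S.lead k ≤ m
  · obtain ⟨k, hk⟩ := hm
    have hrel : S.rel k ∈ S.ideal := Ideal.subset_span ⟨k, rfl⟩
    have key : monomial m 1 - S.nf m = monomial (m - S.lead k) 1 * S.rel k -
        ∑ x ∈ (S.tail k).support,
          coeff x (S.tail k) • (monomial (m - S.lead k + x) 1 - S.nf (m - S.lead k + x)) := by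
      rw [S.nf_eq_reduceBy hk, reduceBy, rel, mul_add, monomial_mul, one_mul,
        tsub_add_cancel_of_le hk, monomial_one_mul_eq_sum]
      simp only [smul_sub, Finset.sum_sub_distrib]
      ring
    rw [key]
    refine sub_mem (Ideal.mul_mem_left _ _ hrel) (Submodule.sum_mem _ fun x hx => ?_)
    exact Submodule.smul_of_tower_mem _ _ (ih _ (hw ▸ S.weight_reduce_lt hk hx) _ rfl)
  · rw [S.nf_of_isStandard (by simpa [IsStandard] using hm), sub_self]
    exact zero_mem _

def standardMonomials : Set (MvPolynomial σ R) :=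
  Set.range fun d : {d // S.IsStandard d} => monomial d.1 1

lemma nf_mem_span_standardMonomials (m : σ →₀ ℕ) :
    S.nf m ∈ Submodule.span R S.standardMonomials := by
  induction hw : S.weight m using Nat.strong_induction_on generalizing m with
  | _ w ih =>
  by_cases hm : ∃ k, S.lead k ≤ m
  · obtain ⟨k, hk⟩ := hm
    rw [S.nf_eq_reduceBy hk, reduceBy]
    refine neg_mem (Submodule.sum_mem _ fun x hx => Submodule.smul_mem _ _ ?_)
    exact ih _ (hw ▸ S.weight_reduce_lt hk hx) _ rfl
  · have hm : S.IsStandard m := by simpa [IsStandard] using hm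
    rw [S.nf_of_isStandard hm]
    exact Submodule.subset_span ⟨⟨m, hm⟩, rfl⟩

noncomputable def normalForm : MvPolynomial σ R →ₗ[R] MvPolynomial σ R :=
  (basisMonomials σ R).constr R S.nf

lemma normalForm_monomial (m : σ →₀ ℕ) (a : R) :
    S.normalForm (monomial m a) = a • S.nf m := by
  rw [← smul_monomial_one, map_smul, normalForm]
  exact congrArg (a • ·) ((basisMonomials σ R).constr_basis R S.nf m)

lemma normalForm_monomial_mul_rel (c : σ →₀ ℕ) (k : κ) :
    S.normalForm (monomial c 1 * S.rel k) = 0 := by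
  rw [rel, mul_add, monomial_mul, one_mul, monomial_one_mul_eq_sum, map_add, map_sum,
    normalForm_monomial, one_smul, S.nf_eq_reduceBy le_add_self, reduceBy]
  simp only [add_tsub_cancel_right, map_smul, normalForm_monomial, one_smul, neg_add_cancel]

lemma normalForm_mul_rel (q : MvPolynomial σ R) (k : κ) : S.normalForm (q * S.rel k) = 0 := by
  induction q using MvPolynomial.induction_on' with
  | monomial c a =>
    rw [← smul_monomial_one, smul_mul_assoc, map_smul, normalForm_monomial_mul_rel, smul_zero]
  | add p q hp hq => rw [add_mul, map_add, hp, hq, add_zero]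

lemma normalForm_eq_zero_of_mem_ideal {p : MvPolynomial σ R} (hp : p ∈ S.ideal) :
    S.normalForm p = 0 := by
  suffices ∀ q, S.normalForm (q * p) = 0 by simpa using this 1
  induction hp using Submodule.span_induction with
  | mem y hy =>
    obtain ⟨k, rfl⟩ := hy
    exact fun q => S.normalForm_mul_rel q k
  | zero => simp
  | add y z _ _ hy hz => exact fun q => by rw [mul_add, map_add, hy, hz, add_zero]
  | smul a y _ hy => exact fun q => by rw [smul_eq_mul, ← mul_assoc, hy]

lemma sub_normalForm_mem_ideal (p : MvPolynomial σ R) : p - S.normalForm p ∈ S.ideal := by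
  induction p using MvPolynomial.induction_on' with
  | monomial m a =>
    rw [normalForm_monomial, ← smul_monomial_one, ← smul_sub, smul_eq_C_mul]
    exact Ideal.mul_mem_left _ _ (S.monomial_sub_nf_mem_ideal m)
  | add p q hp hq =>
    rw [map_add, add_sub_add_comm]
    exact add_mem hp hq

lemma normalForm_mem_span_standardMonomials (p : MvPolynomial σ R) :
    S.normalForm p ∈ Submodule.span R S.standardMonomials := by
  induction p using MvPolynomial.induction_on' with
  | monomial m a =>
    rw [normalForm_monomial]
    exact Submodule.smul_mem _ _ (S.nf_mem_span_standardMonomials m)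
  | add p q hp hq =>
    rw [map_add]
    exact add_mem hp hq

lemma normalForm_eq_self_of_mem_span {p : MvPolynomial σ R}
    (hp : p ∈ Submodule.span R S.standardMonomials) : S.normalForm p = p := by
  refine LinearMap.eqOn_span (g := LinearMap.id) ?_ hp
  rintro _ ⟨⟨d, hd⟩, rfl⟩
  simp [normalForm_monomial, S.nf_of_isStandard hd]

theorem linearIndependent_mk_standard :
    LinearIndependent R fun d : {d // S.IsStandard d} =>
      Ideal.Quotient.mk S.ideal (monomial d.1 (1 : R)) := by
  have hmon : LinearIndependent R fun d : {d // S.IsStandard d} => monomial d.1 (1 : R) := by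
    simpa [Function.comp_def] using
      (basisMonomials σ R).linearIndependent.comp _ Subtype.val_injective
  refine hmon.map (f := (Ideal.Quotient.mkₐ R S.ideal).toLinearMap) ?_
  refine Submodule.disjoint_def.mpr fun p hspan hker => ?_
  have hp : p ∈ S.ideal := Ideal.Quotient.eq_zero_iff_mem.mp (by simpa using hker)
  rw [← S.normalForm_eq_self_of_mem_span hspan, S.normalForm_eq_zero_of_mem_ideal hp]

theorem span_mk_standard_eq_top :
    Submodule.span R (Set.range fun d : {d // S.IsStandard d} =>
      Ideal.Quotient.mk S.ideal (monomial d.1 (1 : R))) = ⊤ := by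
  refine eq_top_iff.mpr fun z _ => ?_
  obtain ⟨p, rfl⟩ := Ideal.Quotient.mk_surjective z
  have hp : Ideal.Quotient.mk S.ideal p = Ideal.Quotient.mk S.ideal (S.normalForm p) :=
    Ideal.Quotient.eq.mpr (S.sub_normalForm_mem_ideal p)
  have hmap := Submodule.mem_map_of_mem (f := (Ideal.Quotient.mkₐ R S.ideal).toLinearMap)
    (S.normalForm_mem_span_standardMonomials p)
  rw [Submodule.map_span, standardMonomials, ← Set.range_comp] at hmap
  simpa [hp, Function.comp_def] using hmap

end CoprimeLeadingFamily

namespace QuadricQuasimap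

variable {n N₁ N₂ : ℕ}

/-- `(i, s, t)` stands for the monomial `fⁱ[s] gᵢ[t]`. -/
abbrev Term (n N₁ N₂ : ℕ) := Fin n × QIdx N₁ N₂ × QIdx N₁ N₂

namespace Term

noncomputable def exp (x : Term n N₁ N₂) : (Fin n ⊕ Fin n) × QIdx N₁ N₂ →₀ ℕ :=
  Finsupp.single (Sum.inl x.1, x.2.1) 1 + Finsupp.single (Sum.inr x.1, x.2.2) 1

def level (x : Term n N₁ N₂) : ℤ := x.2.1 + x.2.2

lemma level_mem_Icc (x : Term n N₁ N₂) :
    x.level ∈ Finset.Icc (-(2 * N₁ : ℤ)) (2 * N₂ : ℤ) := by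
  obtain ⟨-, ⟨p, hp⟩, ⟨q, hq⟩⟩ := x
  simp only [Finset.mem_Icc, level] at hp hq ⊢
  omega

def IsLead (a b : Fin n) (x : Term n N₁ N₂) : Prop :=
  (x.1 = a ∧ (x.2.1 : ℤ) = x.2.2) ∨ (x.1 = b ∧ (x.2.1 : ℤ) = x.2.2 + 1)

lemma exp_le_iff {x : Term n N₁ N₂} {d : (Fin n ⊕ Fin n) × QIdx N₁ N₂ →₀ ℕ} :
    x.exp ≤ d ↔ 1 ≤ d (Sum.inl x.1, x.2.1) ∧ 1 ≤ d (Sum.inr x.1, x.2.2) := by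
  refine ⟨fun h => ⟨by simpa [exp] using h (Sum.inl x.1, x.2.1),
    by simpa [exp] using h (Sum.inr x.1, x.2.2)⟩, fun h => ?_⟩
  refine Finsupp.add_le_of_disjoint ?_ (Finsupp.single_le_iff.mpr h.1)
    (Finsupp.single_le_iff.mpr h.2)
  simp [Finsupp.disjoint_iff]

lemma IsLead.eq_of_level_eq {a b : Fin n} {x y : Term n N₁ N₂} (hx : x.IsLead a b)
    (hy : y.IsLead a b) (h : x.level = y.level) : x = y := by
  obtain ⟨i, ⟨p, hp⟩, ⟨q, hq⟩⟩ := x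
  obtain ⟨j, ⟨p', hp'⟩, ⟨q', hq'⟩⟩ := y
  simp only [IsLead, level] at hx hy h
  have : i = j ∧ p = p' ∧ q = q' := by
    rcases hx with ⟨rfl, _⟩ | ⟨rfl, _⟩ <;> rcases hy with ⟨rfl, _⟩ | ⟨rfl, _⟩ <;>
      first | exact ⟨rfl, by omega, by omega⟩ | omega
  obtain ⟨rfl, rfl, rfl⟩ := this
  rfl

lemma IsLead.eq_of_fst_eq {a b : Fin n} (hab : a ≠ b) {x y : Term n N₁ N₂} (hx : x.IsLead a b)
    (hy : y.IsLead a b) (h₁ : x.1 = y.1) (h₂ : x.2.1 = y.2.1 ∨ x.2.2 = y.2.2) : x = y := by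
  obtain ⟨i, ⟨p, hp⟩, ⟨q, hq⟩⟩ := x
  obtain ⟨j, ⟨p', hp'⟩, ⟨q', hq'⟩⟩ := y
  simp only [IsLead, Subtype.mk.injEq] at hx hy h₁ h₂
  subst h₁
  have : p = p' ∧ q = q' := by
    rcases hx with ⟨rfl, _⟩ | ⟨rfl, _⟩ <;> rcases hy with ⟨h, _⟩ | ⟨h, _⟩ <;>
      first | exact absurd h hab | exact absurd h.symm hab | omega
  obtain ⟨rfl, rfl⟩ := this
  rfl

lemma IsLead.disjoint_exp {a b : Fin n} (hab : a ≠ b) {x y : Term n N₁ N₂} (hx : x.IsLead a b)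
    (hy : y.IsLead a b) (hxy : x ≠ y) : Disjoint x.exp y.exp := by
  rw [Finsupp.disjoint_iff, Finset.disjoint_left]
  intro v hvx hvy
  simp only [exp, Finsupp.support_add_eq_union, Finset.mem_union, Finsupp.mem_support_single]
    at hvx hvy
  refine hxy (hx.eq_of_fst_eq hab hy ?_ ?_) <;>
    rcases hvx with ⟨rfl, -⟩ | ⟨rfl, -⟩ <;> rcases hvy with ⟨h, -⟩ | ⟨h, -⟩ <;>
    simp_all

/-- On a term `fⁱ[s] gᵢ[t]` of `r[l]` this adds up to `-l² - (s - t)²`, plus `1` if `i = a` and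
`2 (s - t)` if `i = b`: at most `-l²`, except at the leading term of `r[l]`, where it is
`1 - l²`. -/
def varWeight (a b : Fin n) : (Fin n ⊕ Fin n) × QIdx N₁ N₂ → ℤ
  | (Sum.inl i, s) => (if i = a then 1 else if i = b then 2 * (s : ℤ) else 0) - 2 * (s : ℤ) ^ 2
  | (Sum.inr i, t) => (if i = b then -2 * (t : ℤ) else 0) - 2 * (t : ℤ) ^ 2

def weight (a b : Fin n) (x : Term n N₁ N₂) : ℤ :=
  varWeight a b (Sum.inl x.1, x.2.1) + varWeight a b (Sum.inr x.1, x.2.2)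

lemma IsLead.weight_eq {a b : Fin n} (hab : a ≠ b) {x : Term n N₁ N₂} (hx : x.IsLead a b) :
    x.weight a b = 1 - x.level ^ 2 := by
  obtain ⟨i, ⟨p, hp⟩, ⟨q, hq⟩⟩ := x
  rcases hx with ⟨rfl, h⟩ | ⟨rfl, h⟩ <;>
    simp only [weight, varWeight, level, if_neg hab, if_neg hab.symm, if_true] at h ⊢ <;>
    rw [h] <;> ring

lemma weight_le_of_not_isLead {a b : Fin n} (hab : a ≠ b) {x : Term n N₁ N₂}
    (hx : ¬ x.IsLead a b) : x.weight a b ≤ -x.level ^ 2 := by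
  obtain ⟨i, ⟨p, hp⟩, ⟨q, hq⟩⟩ := x
  simp only [IsLead, not_or, not_and] at hx
  by_cases hia : i = a
  · subst hia
    have hpq : 1 ≤ |p - q| := Int.one_le_abs (sub_ne_zero.mpr (hx.1 rfl))
    simp only [weight, varWeight, level, if_neg hab, if_true]
    nlinarith [(one_le_sq_iff_one_le_abs _).mpr hpq]
  by_cases hib : i = b
  · subst hib
    have hpq : 1 ≤ |p - q - 1| := Int.one_le_abs (by have := hx.2 rfl; omega)
    simp only [weight, varWeight, level, if_neg hia, if_true]
    nlinarith [(one_le_sq_iff_one_le_abs _).mpr hpq]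
  · simp only [weight, varWeight, level, if_neg hia, if_neg hib]
    nlinarith [sq_nonneg (p - q)]

end Term

def weightShift (N₁ N₂ : ℕ) : ℤ := 2 * ((N₁ + N₂ : ℕ) : ℤ) ^ 2 + 2 * (N₁ + N₂ : ℕ)

lemma neg_weightShift_le_varWeight (a b : Fin n) (v : (Fin n ⊕ Fin n) × QIdx N₁ N₂) :
    -weightShift N₁ N₂ ≤ Term.varWeight a b v := by
  obtain ⟨i | i, ⟨s, hs⟩⟩ := v <;>
  · rw [Finset.mem_Icc] at hs
    have hsq : s ^ 2 ≤ ((N₁ + N₂ : ℕ) : ℤ) ^ 2 := by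
      push_cast; nlinarith
    simp only [Term.varWeight, weightShift]
    split_ifs <;> push_cast at hsq ⊢ <;> nlinarith

/-- The shift makes the weights natural numbers; it does not change the comparison of two terms
of a relation, which all have degree two. -/
noncomputable def natVarWeight (a b : Fin n) (v : (Fin n ⊕ Fin n) × QIdx N₁ N₂) : ℕ :=
  (weightShift N₁ N₂ + Term.varWeight a b v).toNat

lemma cast_weight_exp (a b : Fin n) (x : Term n N₁ N₂) :
    (Finsupp.weight (natVarWeight a b) x.exp : ℤ) = 2 * weightShift N₁ N₂ + x.weight a b := by
  simp only [Term.exp, map_add, Finsupp.weight_single, one_smul, Nat.cast_add, natVarWeight,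
    Term.weight]
  rw [Int.toNat_of_nonneg (by linarith [neg_weightShift_le_varWeight a b (Sum.inl x.1, x.2.1)]),
    Int.toNat_of_nonneg (by linarith [neg_weightShift_le_varWeight a b (Sum.inr x.1, x.2.2)])]
  ring

noncomputable def levelTerms (n N₁ N₂ : ℕ) (l : ℤ) : Finset (Term n N₁ N₂) :=
  Finset.univ.filter fun x => x.level = l

lemma mem_levelTerms {l : ℤ} {x : Term n N₁ N₂} : x ∈ levelTerms n N₁ N₂ l ↔ x.level = l := by
  simp [levelTerms]

lemma qmRel_eq_sum (l : ℤ) :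
    qmRel n N₁ N₂ l = ∑ x ∈ levelTerms n N₁ N₂ l, monomial x.exp 1 := by
  rw [levelTerms, Finset.sum_filter, Fintype.sum_prod_type, Finset.sum_comm]
  simp only [qmRel, Finset.ite_sum_zero, Fintype.sum_prod_type, Term.level, Term.exp, X,
    monomial_mul, one_mul]
  rfl

/-- The relation `r[l]` rewrites its unique leading term `x` (`f^a[u] g_a[u]` when `l = 2u`,
`f^b[u+1] g_b[u]` when `l = 2u + 1`) into minus the remaining terms. -/
noncomputable def coprimeLeadingFamily (a b : Fin n) (hab : a ≠ b) :
    CoprimeLeadingFamily ((Fin n ⊕ Fin n) × QIdx N₁ N₂) ℂ {x : Term n N₁ N₂ // x.IsLead a b} where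
  lead x := x.1.exp
  tail x := ∑ y ∈ (levelTerms n N₁ N₂ x.1.level).erase x.1, monomial y.exp 1
  varWeight := natVarWeight a b
  weight_lt_of_mem_support_tail := by
    rintro ⟨x, hx⟩ m hm
    classical
    obtain ⟨y, hy, hmy⟩ := Finset.mem_biUnion.mp (support_sum hm)
    obtain ⟨hyx, hy⟩ := Finset.mem_erase.mp hy
    rw [Finset.mem_singleton.mp (support_monomial_subset hmy)]
    have hlevel : y.level = x.level := mem_levelTerms.mp hy
    have hlt : y.weight a b < x.weight a b := by
      rw [hx.weight_eq hab, ← hlevel]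
      linarith [Term.weight_le_of_not_isLead hab fun hy' => hyx (hy'.eq_of_level_eq hx hlevel)]
    change Finsupp.weight _ y.exp < Finsupp.weight _ x.exp
    have := cast_weight_exp a b x
    have := cast_weight_exp a b y
    omega
  pairwise_disjoint_lead x y hxy := x.2.disjoint_exp hab y.2 (Subtype.coe_ne_coe.mpr hxy)

lemma coprimeLeadingFamily_rel (a b : Fin n) (hab : a ≠ b)
    (x : {x : Term n N₁ N₂ // x.IsLead a b}) :
    (coprimeLeadingFamily a b hab).rel x = qmRel n N₁ N₂ x.1.level := by
  rw [qmRel_eq_sum, CoprimeLeadingFamily.rel,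
    ← Finset.add_sum_erase _ _ (mem_levelTerms.mpr rfl)]
  rfl

lemma exists_isLead_level_eq (a b : Fin n) {l : ℤ}
    (hl : l ∈ Finset.Icc (-(2 * N₁ : ℤ)) (2 * N₂ : ℤ)) :
    ∃ x : Term n N₁ N₂, x.IsLead a b ∧ x.level = l := by
  rw [Finset.mem_Icc] at hl
  have hu : l / 2 ∈ Finset.Icc (-(N₁ : ℤ)) N₂ := Finset.mem_Icc.mpr ⟨by omega, by omega⟩
  rcases Int.emod_two_eq_zero_or_one l with h | h
  · exact ⟨(a, ⟨l / 2, hu⟩, ⟨l / 2, hu⟩), Or.inl ⟨rfl, rfl⟩, by simp only [Term.level]; omega⟩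
  · have hu' : l / 2 + 1 ∈ Finset.Icc (-(N₁ : ℤ)) N₂ := Finset.mem_Icc.mpr ⟨by omega, by omega⟩
    exact ⟨(b, ⟨l / 2 + 1, hu'⟩, ⟨l / 2, hu⟩), Or.inr ⟨rfl, rfl⟩, by simp only [Term.level]; omega⟩

lemma qmIdeal_eq (a b : Fin n) (hab : a ≠ b) :
    qmIdeal n N₁ N₂ = (coprimeLeadingFamily a b hab).ideal := by
  refine congrArg Ideal.span (Set.ext fun p => ⟨?_, ?_⟩)
  · rintro ⟨l, hl, rfl⟩
    obtain ⟨x, hx, rfl⟩ := exists_isLead_level_eq a b hl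
    exact ⟨⟨x, hx⟩, coprimeLeadingFamily_rel a b hab _⟩
  · rintro ⟨x, rfl⟩
    exact ⟨x.1.level, x.1.level_mem_Icc, coprimeLeadingFamily_rel a b hab x⟩

lemma isStandard_iff (a b : Fin n) (hab : a ≠ b) (d : (Fin n ⊕ Fin n) × QIdx N₁ N₂ →₀ ℕ) :
    ((∀ k : QIdx N₁ N₂, ¬ (1 ≤ d (Sum.inr a, k) ∧ 1 ≤ d (Sum.inl a, k))) ∧
      (∀ k k' : QIdx N₁ N₂, (k' : ℤ) = (k : ℤ) + 1 →
        ¬ (1 ≤ d (Sum.inr b, k) ∧ 1 ≤ d (Sum.inl b, k')))) ↔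
    (coprimeLeadingFamily a b hab).IsStandard d := by
  simp only [CoprimeLeadingFamily.IsStandard, coprimeLeadingFamily, Term.exp_le_iff]
  constructor
  · rintro ⟨ha, hb⟩ ⟨⟨i, p, q⟩, ⟨rfl, hpq⟩ | ⟨rfl, hpq⟩⟩ ⟨hf, hg⟩
    · cases Subtype.ext hpq
      exact ha p ⟨hg, hf⟩
    · exact hb q p hpq ⟨hg, hf⟩
  · intro h
    exact ⟨fun k hk => h ⟨(a, k, k), Or.inl ⟨rfl, rfl⟩⟩ hk.symm,
      fun k k' hk hkk => h ⟨(b, k', k), Or.inr ⟨rfl, hk⟩⟩ hkk.symm⟩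

end QuadricQuasimap

/-- Straightened-law basis for quasimaps to an even quadric, `n ≥ 3`: the images in
`AQ = ℂ[fⁱ[s],gⱼ[t]]/(r[−2N₁],…,r[2N₂])` of exactly those monomials divisible by
none of `g₁[t]f¹[t]` (`−N₁ ≤ t ≤ N₂`) and `gₙ[t]fⁿ[t+1]` (`−N₁ ≤ t ≤ N₂−1`)
form a `ℂ`-basis of `AQ`. -/
theorem stmt8 (n N₁ N₂ : ℕ) (hn : 3 ≤ n) :
    LinearIndependent ℂ
      (fun d : {d : ((Fin n ⊕ Fin n) × QIdx N₁ N₂) →₀ ℕ //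
          (∀ k : QIdx N₁ N₂,
            ¬ (1 ≤ d (Sum.inr ⟨0, by omega⟩, k) ∧ 1 ≤ d (Sum.inl ⟨0, by omega⟩, k))) ∧
          (∀ k k' : QIdx N₁ N₂, (k' : ℤ) = (k : ℤ) + 1 →
            ¬ (1 ≤ d (Sum.inr ⟨n - 1, by omega⟩, k) ∧
               1 ≤ d (Sum.inl ⟨n - 1, by omega⟩, k')))} =>
        Ideal.Quotient.mk (qmIdeal n N₁ N₂) (monomial d.1 (1 : ℂ))) ∧
    Submodule.span ℂ
      (Set.range (fun d : {d : ((Fin n ⊕ Fin n) × QIdx N₁ N₂) →₀ ℕ //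
          (∀ k : QIdx N₁ N₂,
            ¬ (1 ≤ d (Sum.inr ⟨0, by omega⟩, k) ∧ 1 ≤ d (Sum.inl ⟨0, by omega⟩, k))) ∧
          (∀ k k' : QIdx N₁ N₂, (k' : ℤ) = (k : ℤ) + 1 →
            ¬ (1 ≤ d (Sum.inr ⟨n - 1, by omega⟩, k) ∧
               1 ≤ d (Sum.inl ⟨n - 1, by omega⟩, k')))} =>
        Ideal.Quotient.mk (qmIdeal n N₁ N₂) (monomial d.1 (1 : ℂ)))) = ⊤ := by
  have hab : (⟨0, by omega⟩ : Fin n) ≠ ⟨n - 1, by omega⟩ :=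
    Fin.ne_of_val_ne (show 0 ≠ n - 1 by omega)
  let S := QuadricQuasimap.coprimeLeadingFamily (N₁ := N₁) (N₂ := N₂) _ _ hab
  let e := Equiv.subtypeEquivRight (QuadricQuasimap.isStandard_iff (N₁ := N₁) (N₂ := N₂) _ _ hab)
  rw [QuadricQuasimap.qmIdeal_eq _ _ hab]
  have hspan := S.span_mk_standard_eq_top
  rw [← e.surjective.range_comp] at hspan
  exact ⟨(linearIndependent_equiv e).mpr S.linearIndependent_mk_standard, hspan⟩
end
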